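/- Let (X,φ) be a transitive topological dynamical system with transitivity point x (the forward orbit of x is dense), and m ≥ 2. Then either x is a mean m-equicontinuity point, or (X,φ) is mean m-sensitive. -/
import Mathlib


open Filter Metric Set

/-- Minimum pairwise distance of an `m`-tuple. -/
noncomputable def Dmin {X : Type*} [MetricSpace X] {m : ℕ} (x : Fin m → X) : ℝ :=
  sInf {r : ℝ | ∃ i j : Fin m, i < j ∧ r = dist (x i) (x j)}

/-- Maximum pairwise distance of an `m`-tuple. -/
noncomputable def Dmax {X : Type*} [MetricSpace X] {m : ℕ} (x : Fin m → X) : ℝ :=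
  sSup {r : ℝ | ∃ i j : Fin m, i < j ∧ r = dist (x i) (x j)}

/-- The Besicovitch `m`-distance of an `m`-tuple under the dynamics `φ`. -/
noncomputable def DBar {X : Type*} [MetricSpace X] {m : ℕ} (φ : X → X) (x : Fin m → X) : ℝ :=
  Filter.limsup (fun n : ℕ => (∑ i ∈ Finset.range n, Dmin (fun j => φ^[i] (x j))) / n)
    Filter.atTop

lemma limsup_avg_shift {f : ℕ → ℝ} {C : ℝ} (hf0 : ∀ i, 0 ≤ f i) (hfC : ∀ i, f i ≤ C) (n : ℕ) :
    limsup (fun N : ℕ => (∑ i ∈ Finset.range N, f i) / N) atTop ≤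
    limsup (fun N : ℕ => (∑ i ∈ Finset.range N, f (i + n)) / N) atTop := by
  set A : ℕ → ℝ := fun N => ∑ i ∈ Finset.range N, f i with hA
  set g : ℕ → ℝ := fun N => (∑ i ∈ Finset.range N, f (i + n)) / N with hg
  have hC0 : 0 ≤ C := (hf0 0).trans (hfC 0)
  have hA0 : ∀ N, 0 ≤ A N := fun N => Finset.sum_nonneg fun i _ => hf0 i
  have hAC : ∀ N, A N ≤ N * C := by
    intro N
    calc A N ≤ ∑ i ∈ Finset.range N, C := Finset.sum_le_sum fun i _ => hfC i
    _ = N * C := by simp [mul_comm]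
  have hgC : ∀ N, g N ≤ C := by
    intro N
    rcases Nat.eq_zero_or_pos N with h | h
    · simp [hg, h, hC0]
    · rw [hg, div_le_iff₀ (by positivity)]
      calc (∑ i ∈ Finset.range N, f (i + n)) ≤ ∑ i ∈ Finset.range N, C :=
        Finset.sum_le_sum fun i _ => hfC _
      _ = C * N := by simp [mul_comm]
  have hg0 : ∀ N, 0 ≤ g N := fun N => div_nonneg (Finset.sum_nonneg fun i _ => hf0 _) (Nat.cast_nonneg N)
  -- key pointwise estimate
  have key : ∀ N : ℕ, 1 ≤ N → A (N + n) / (↑(N + n)) ≤ g N + (n * C) / N := by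
    intro N hN
    have hNpos : (0:ℝ) < N := by exact_mod_cast hN
    have hsplit : A (N + n) = A n + ∑ i ∈ Finset.range N, f (i + n) := by
      show (∑ i ∈ Finset.range (N+n), f i) = (∑ i ∈ Finset.range n, f i) + _
      rw [← Finset.sum_range_add_sum_Ico f (Nat.le_add_left n N)]
      congr 1
      rw [Finset.sum_Ico_eq_sum_range]
      simp [add_comm]
    have h1 : A (N + n) / (↑(N + n)) ≤ A (N + n) / N := by
      apply div_le_div_of_nonneg_left (hA0 _) hNpos
      exact_mod_cast Nat.le_add_right N n
    refine h1.trans ?_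
    rw [hsplit, add_div]
    rw [add_comm (g N)]
    gcongr
    exact (hAC n).trans_eq (by ring)
  set L := limsup (fun N : ℕ => A N / N) atTop with hL
  set G := limsup g atTop with hG
  by_contra hcon
  push_neg at hcon
  set b := (G + L) / 2 with hb
  have hGb : G < b := by rw [hb]; linarith
  have hbL : b < L := by rw [hb]; linarith
  have hgbd : IsBoundedUnder (· ≤ ·) atTop g := isBoundedUnder_of ⟨C, hgC⟩
  have hev1 : ∀ᶠ N in atTop, g N < G + (b - G) / 2 :=
    eventually_lt_of_limsup_lt (by rw [← hG]; linarith) hgbd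
  have hev2 : ∀ᶠ N : ℕ in atTop, (n * C : ℝ) / N < (b - G) / 2 :=
    (tendsto_const_div_atTop_nhds_zero_nat (n * C)).eventually_lt_const (by linarith)
  have hev : ∀ᶠ N : ℕ in atTop, A (N + n) / (↑(N + n)) ≤ b := by
    filter_upwards [hev1, hev2, eventually_ge_atTop 1] with N h1 h2 h3
    have := key N h3
    linarith
  have : limsup (fun N : ℕ => A (N + n) / (↑(N + n))) atTop ≤ b := by
    apply limsup_le_of_le ?_ hev
    exact isCoboundedUnder_le_of_le atTop fun N => div_nonneg (hA0 _) (Nat.cast_nonneg _)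
  rw [limsup_nat_add (fun N : ℕ => A N / N) n] at this
  rw [← hL] at this
  linarith


lemma Dmin_nonneg' {X : Type*} [MetricSpace X] {m : ℕ} (x : Fin m → X) : 0 ≤ Dmin x :=
  Real.sInf_nonneg (by rintro r ⟨i, j, -, rfl⟩; exact dist_nonneg)

lemma Dmin_le_diam' {X : Type*} [MetricSpace X] [CompactSpace X] {m : ℕ} (hm : 2 ≤ m)
    (x : Fin m → X) : Dmin x ≤ Metric.diam (Set.univ : Set X) := by
  have h01 : (⟨0, by omega⟩ : Fin m) < ⟨1, by omega⟩ := by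
    simp [Fin.lt_def]
  have hmem : dist (x ⟨0, by omega⟩) (x ⟨1, by omega⟩) ∈
      {r : ℝ | ∃ i j : Fin m, i < j ∧ r = dist (x i) (x j)} :=
    ⟨_, _, h01, rfl⟩
  have hbdd : BddBelow {r : ℝ | ∃ i j : Fin m, i < j ∧ r = dist (x i) (x j)} :=
    ⟨0, by rintro r ⟨i, j, -, rfl⟩; exact dist_nonneg⟩
  exact (csInf_le hbdd hmem).trans
    (dist_le_diam_of_mem isCompact_univ.isBounded (mem_univ _) (mem_univ _))

theorem stmt7 {X : Type*} [MetricSpace X] [CompactSpace X] {m : ℕ} (hm : 2 ≤ m)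
    (φ : X → X) (hφ : IsHomeomorph φ) (x : X)
    -- `x` is a transitivity point: its forward orbit is dense
    (hx : Dense (Set.range fun n : ℕ => φ^[n] x)) :
    -- either `x` is a mean `m`-equicontinuity point ...
    (∀ ε > (0 : ℝ), ∃ δ > (0 : ℝ), ∀ x' : Fin m → X,
      (∃ i : Fin m, x' i = x) → (∀ j : Fin m, x' j ∈ Metric.ball x δ) → DBar φ x' < ε) ∨
    -- ... or the system is mean `m`-sensitive
    (∃ ε > (0 : ℝ), ∀ U : Set X, IsOpen U → U.Nonempty →
      ∃ x' : Fin m → X, (∀ j : Fin m, x' j ∈ U) ∧ ε ≤ DBar φ x') := by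
  by_cases h : ∀ ε > (0 : ℝ), ∃ δ > (0 : ℝ), ∀ x' : Fin m → X,
      (∃ i : Fin m, x' i = x) → (∀ j : Fin m, x' j ∈ Metric.ball x δ) → DBar φ x' < ε
  · exact Or.inl h
  push_neg at h
  obtain ⟨ε, hε, hsen⟩ := h
  refine Or.inr ⟨ε, hε, fun U hU hUne => ?_⟩
  obtain ⟨y, ⟨n, rfl⟩, hyU⟩ := hx.exists_mem_open hU hUne
  have hcont : Continuous (φ^[n]) := hφ.continuous.iterate n
  have hopen : IsOpen ((φ^[n]) ⁻¹' U) := hU.preimage hcont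
  obtain ⟨δ, hδ, hball⟩ := Metric.isOpen_iff.mp hopen x hyU
  obtain ⟨x', -, hballmem, hDB⟩ := hsen δ hδ
  refine ⟨fun j => φ^[n] (x' j), fun j => hball (hballmem j), ?_⟩
  set f : ℕ → ℝ := fun i => Dmin (fun j => φ^[i] (x' j)) with hf
  have hf0 : ∀ i, 0 ≤ f i := fun i => Dmin_nonneg' _
  have hfC : ∀ i, f i ≤ Metric.diam (Set.univ : Set X) := fun i => Dmin_le_diam' hm _
  have hDeq : DBar φ (fun j => φ^[n] (x' j)) =
      limsup (fun N : ℕ => (∑ i ∈ Finset.range N, f (i + n)) / N) atTop := by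
    unfold DBar
    congr 1
    funext N
    congr 1
    refine Finset.sum_congr rfl fun i _ => ?_
    simp only [hf, Function.iterate_add_apply]
  calc ε ≤ DBar φ x' := hDB
  _ ≤ _ := by
      rw [hDeq]
      exact limsup_avg_shift hf0 hfC n
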